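/- If δ : R → R is an additive generalized Jordan derivation with relating Jordan derivation τ on a 2-torsion free ring R, then δ(abc + cba) = δ(a)bc + aτ(b)c + abτ(c) + δ(c)ba + cτ(b)a + cbτ(a) for all a, b, c ∈ R. -/

import Mathlib

/-! Polarizing `δ (a ^ 2) = δ a * a + a * τ a` at `a + b` gives the formula for `δ (a * b + b * a)`;
the case `δ = τ` gives the same for the Jordan derivation `τ`.
Expanding `δ (a * (a * b + b * a) + (a * b + b * a) * a)` once with this formula directly, and once
after rewriting the argument as `(a ^ 2 * b + b * a ^ 2) + 2 • (a * b * a)`, determines `2 • δ (a * b * a)`,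
hence `δ (a * b * a)` since `R` has no 2-torsion. Polarizing the resulting identity at `a + c` gives the
theorem. -/

section GeneralizedJordanDerivation

variable {R : Type*} [Ring R] {δ τ : R → R}

theorem map_mul_add_mul_of_map_sq (hδadd : ∀ x y, δ (x + y) = δ x + δ y)
    (hτadd : ∀ x y, τ (x + y) = τ x + τ y) (hδ : ∀ a, δ (a ^ 2) = δ a * a + a * τ a) (x y : R) :
    δ (x * y + y * x) = δ x * y + x * τ y + δ y * x + y * τ x := by
  have h := hδ (x + y)
  rw [show (x + y) ^ 2 = x ^ 2 + (x * y + y * x) + y ^ 2 by noncomm_ring,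
    hδadd (x ^ 2 + _), hδadd (x ^ 2), hδ x, hδ y, hδadd x y, hτadd x y] at h
  linear_combination (norm := noncomm_ring) h

theorem map_mul_mul_self (htf : ∀ x : R, x + x = 0 → x = 0)
    (hδadd : ∀ x y, δ (x + y) = δ x + δ y) (hτadd : ∀ x y, τ (x + y) = τ x + τ y)
    (hτ : ∀ a, τ (a ^ 2) = τ a * a + a * τ a) (hδ : ∀ a, δ (a ^ 2) = δ a * a + a * τ a) (a b : R) :
    δ (a * b * a) = δ a * b * a + a * τ b * a + a * b * τ a := by
  have hpolδ := map_mul_add_mul_of_map_sq hδadd hτadd hδ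
  have hpolτ := map_mul_add_mul_of_map_sq hτadd hτadd hτ
  have hexpand := hpolδ a (a * b + b * a)
  rw [show a * (a * b + b * a) + (a * b + b * a) * a
      = (a ^ 2 * b + b * a ^ 2) + (a * b * a + a * b * a) by noncomm_ring,
    hδadd (a ^ 2 * b + b * a ^ 2), hδadd (a * b * a), hpolδ (a ^ 2) b, hδ, hτ, hpolτ,
    hpolδ a b] at hexpand
  refine sub_eq_zero.mp (htf _ ?_)
  linear_combination (norm := noncomm_ring) hexpand

end GeneralizedJordanDerivation

theorem stmt_2 {R : Type*} [Ring R]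
    (htf : ∀ x : R, x + x = 0 → x = 0)
    (δ τ : R → R)
    (hδadd : ∀ x y, δ (x + y) = δ x + δ y)
    (hτadd : ∀ x y, τ (x + y) = τ x + τ y)
    (hτ : ∀ a, τ (a ^ 2) = τ a * a + a * τ a)
    (hδ : ∀ a, δ (a ^ 2) = δ a * a + a * τ a) :
    ∀ a b c : R, δ (a * b * c + c * b * a) =
      δ a * b * c + a * τ b * c + a * b * τ c +
      δ c * b * a + c * τ b * a + c * b * τ a := by
  intro a b c
  have hsandwich := map_mul_mul_self htf hδadd hτadd hτ hδ
  have h := hsandwich (a + c) b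
  rw [show (a + c) * b * (a + c) = a * b * a + (a * b * c + c * b * a) + c * b * c by noncomm_ring,
    hδadd (a * b * a + _), hδadd (a * b * a), hsandwich a, hsandwich c, hδadd a c, hτadd a c] at h
  linear_combination (norm := noncomm_ring) h
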